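/- arXiv:1401.3212 — 2 statements merged into one kernel-verified Lean document; each statement's English description precedes it below -/
import Mathlib

section
/- If the coefficients a_n satisfy the recurrence (n+r)(n+r-1)(n+r-2)(n+r-3)a_n = -p_0(n+r-3)(n+r-2)a_{n-2} - γ(n+r-3)² a_{n-3} + Λ a_{n-4} for all n ≥ 4, with r ∈ {0,1,2,3} and prescribed a_0, a_1, a_2, a_3 (taken so the recurrence is well-defined), then the power series Σ a_n z^n has infinite radius of convergence. -/
/-!
Writing `x = n + r ≥ n`, the recurrence divided by `(x - 2)(x - 3)` gives
`n (n - 1) |a n| ≤ |p₀| |a (n - 2)| + |γ| |a (n - 3)| + |Λ| |a (n - 4)|`.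
Hence for every `R ≥ 1` the weighted coefficients `|a n| R ^ n` can no longer grow once
`n (n - 1) ≥ (|p₀| + |γ| + |Λ|) R ^ 4`, so they are bounded, and `∑ a n z ^ n` is dominated by
a geometric series whenever `|z| < R`.
-/

open Finset

theorem exists_forall_le_of_forall_lt_le {v : ℕ → ℝ} (N : ℕ)
    (hstep : ∀ n, N < n → ∀ C, (∀ m < n, v m ≤ C) → v n ≤ C) : ∃ C, ∀ n, v n ≤ C := by
  refine ⟨(range (N + 1)).sup' nonempty_range_add_one v, fun n => ?_⟩
  induction n using Nat.strong_induction_on with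
  | _ n ih =>
    rcases le_or_gt n N with hn | hn
    · exact le_sup' v (mem_range_succ_iff.mpr hn)
    · exact hstep n hn _ ih

theorem summable_mul_pow_of_abs_mul_pow_le {a : ℕ → ℝ} {z R C : ℝ} (hzR : |z| < R)
    (hC : ∀ n, |a n| * R ^ n ≤ C) : Summable fun n => a n * z ^ n := by
  have hR : 0 < R := (abs_nonneg z).trans_lt hzR
  have hgeom : Summable fun n => C * (|z| / R) ^ n :=
    (summable_geometric_of_lt_one (by positivity) ((div_lt_one hR).mpr hzR)).mul_left C
  refine .of_norm_bounded hgeom fun n => ?_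
  calc ‖a n * z ^ n‖ = |a n| * R ^ n * (|z| / R) ^ n := by
        rw [Real.norm_eq_abs, abs_mul, abs_pow, div_pow]
        field_simp
    _ ≤ C * (|z| / R) ^ n := by gcongr; exact hC n

theorem mul_abs_le_of_frobenius_step {x p₀ γ Λ b c d e : ℝ} (hx : 4 ≤ x)
    (h : x * (x - 1) * (x - 2) * (x - 3) * b =
      -p₀ * (x - 3) * (x - 2) * c - γ * (x - 3) ^ 2 * d + Λ * e) :
    x * (x - 1) * |b| ≤ |p₀| * |c| + |γ| * |d| + |Λ| * |e| := by
  have hx3 : 0 ≤ x - 3 := by linarith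
  have hx2 : 0 ≤ x - 2 := by linarith
  have hx1 : 0 ≤ x - 1 := by linarith
  have hpos : 0 < (x - 2) * (x - 3) := by nlinarith
  refine le_of_mul_le_mul_left ?_ hpos
  calc (x - 2) * (x - 3) * (x * (x - 1) * |b|)
        = |x * (x - 1) * (x - 2) * (x - 3) * b| := by
          rw [abs_mul, abs_of_nonneg (by positivity : 0 ≤ x * (x - 1) * (x - 2) * (x - 3))]
          ring
    _ ≤ |p₀| * ((x - 3) * (x - 2)) * |c| + |γ| * (x - 3) ^ 2 * |d| + |Λ| * |e| := by
          rw [h]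
          refine (abs_add_le _ _).trans (add_le_add ((abs_sub _ _).trans (le_of_eq ?_)) ?_)
          · simp only [abs_mul, abs_neg, abs_pow, abs_of_nonneg hx3, abs_of_nonneg hx2]
            ring
          · rw [abs_mul]
    _ ≤ (x - 2) * (x - 3) * (|p₀| * |c| + |γ| * |d| + |Λ| * |e|) := by
          have hd : (x - 3) ^ 2 ≤ (x - 2) * (x - 3) := by nlinarith
          have he : 1 ≤ (x - 2) * (x - 3) := by nlinarith
          have := mul_le_mul_of_nonneg_right hd (by positivity : 0 ≤ |γ| * |d|)
          have := mul_le_mul_of_nonneg_right he (by positivity : 0 ≤ |Λ| * |e|)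
          nlinarith

def FrobeniusRecurrence (p₀ γ Λ : ℝ) (r : ℕ) (a : ℕ → ℝ) : Prop :=
  ∀ n : ℕ, 4 ≤ n →
    ((n : ℝ) + r) * ((n : ℝ) + r - 1) * ((n : ℝ) + r - 2) * ((n : ℝ) + r - 3) * a n =
      -p₀ * ((n : ℝ) + r - 3) * ((n : ℝ) + r - 2) * a (n - 2)
        - γ * ((n : ℝ) + r - 3) ^ 2 * a (n - 3) + Λ * a (n - 4)

namespace FrobeniusRecurrence

variable {p₀ γ Λ : ℝ} {r : ℕ} {a : ℕ → ℝ}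

theorem mul_abs_le (hrec : FrobeniusRecurrence p₀ γ Λ r a) {n : ℕ} (hn : 4 ≤ n) :
    (n : ℝ) * (n - 1) * |a n| ≤ |p₀| * |a (n - 2)| + |γ| * |a (n - 3)| + |Λ| * |a (n - 4)| := by
  have hn' : (4 : ℝ) ≤ n := by exact_mod_cast hn
  have hr : (0 : ℝ) ≤ r := r.cast_nonneg
  refine le_trans ?_ (mul_abs_le_of_frobenius_step (by linarith) (hrec n hn))
  gcongr <;> linarith

theorem exists_abs_mul_pow_le (hrec : FrobeniusRecurrence p₀ γ Λ r a) {R : ℝ} (hR : 1 ≤ R) :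
    ∃ C, ∀ n, |a n| * R ^ n ≤ C := by
  set M := |p₀| + |γ| + |Λ|
  obtain ⟨N, hN⟩ := exists_nat_ge (M * R ^ 4)
  refine exists_forall_le_of_forall_lt_le (N + 4) fun n hn C hC => ?_
  have hn4 : 4 ≤ n := by omega
  have hnN : (N : ℝ) + 4 ≤ n := by exact_mod_cast hn.le
  have hC0 : 0 ≤ C := (by positivity : 0 ≤ |a 0| * R ^ 0).trans (hC 0 (by omega))
  have hshift : ∀ k, 0 < k → k ≤ 4 → R ^ n * |a (n - k)| ≤ R ^ 4 * C := fun k hk0 hk => by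
    calc R ^ n * |a (n - k)| = R ^ k * (|a (n - k)| * R ^ (n - k)) := by
          rw [← Nat.add_sub_cancel' (by omega : k ≤ n), pow_add, Nat.add_sub_cancel_left]
          ring
      _ ≤ R ^ 4 * C :=
          mul_le_mul (pow_le_pow_right₀ hR hk) (hC _ (by omega)) (by positivity) (by positivity)
  have hpos : 0 < (n : ℝ) * (n - 1) := by nlinarith
  refine le_of_mul_le_mul_left ?_ hpos
  calc (n : ℝ) * (n - 1) * (|a n| * R ^ n) = R ^ n * ((n : ℝ) * (n - 1) * |a n|) := by ring
    _ ≤ R ^ n * (|p₀| * |a (n - 2)| + |γ| * |a (n - 3)| + |Λ| * |a (n - 4)|) := by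
          gcongr; exact hrec.mul_abs_le hn4
    _ = |p₀| * (R ^ n * |a (n - 2)|) + |γ| * (R ^ n * |a (n - 3)|)
          + |Λ| * (R ^ n * |a (n - 4)|) := by ring
    _ ≤ |p₀| * (R ^ 4 * C) + |γ| * (R ^ 4 * C) + |Λ| * (R ^ 4 * C) := by
          gcongr ?_ * ?_ + ?_ * ?_ + ?_ * ?_ <;> exact hshift _ (by norm_num) (by norm_num)
    _ = M * R ^ 4 * C := by ring
    _ ≤ (n : ℝ) * (n - 1) * C := by
          refine mul_le_mul_of_nonneg_right ?_ hC0
          nlinarith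

end FrobeniusRecurrence

theorem frobenius_series_entire_general (p₀ γ Λ : ℝ) (r : ℕ) (a : ℕ → ℝ)
    (hrec : ∀ n : ℕ, 4 ≤ n →
      ((n : ℝ) + r) * ((n : ℝ) + r - 1) * ((n : ℝ) + r - 2) * ((n : ℝ) + r - 3) * a n =
        -p₀ * ((n : ℝ) + r - 3) * ((n : ℝ) + r - 2) * a (n - 2)
          - γ * ((n : ℝ) + r - 3) ^ 2 * a (n - 3) + Λ * a (n - 4)) :
    ∀ z : ℝ, Summable (fun n : ℕ => a n * z ^ n) := by
  intro z
  obtain ⟨C, hC⟩ :=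
    FrobeniusRecurrence.exists_abs_mul_pow_le hrec (le_add_of_nonneg_left (abs_nonneg z))
  exact summable_mul_pow_of_abs_mul_pow_le (lt_add_one |z|) hC

/-- The Frobenius recurrence yields a power series with infinite radius of convergence. -/
theorem frobenius_series_entire (p₀ γ Λ : ℝ) (r : ℕ) (hr : r ≤ 3) (a : ℕ → ℝ)
    (hrec : ∀ n : ℕ, 4 ≤ n →
      ((n : ℝ) + r) * ((n : ℝ) + r - 1) * ((n : ℝ) + r - 2) * ((n : ℝ) + r - 3) * a n =
        -p₀ * ((n : ℝ) + r - 3) * ((n : ℝ) + r - 2) * a (n - 2)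
          - γ * ((n : ℝ) + r - 3) ^ 2 * a (n - 3) + Λ * a (n - 4)) :
    ∀ z : ℝ, Summable (fun n : ℕ => a n * z ^ n) :=
  frobenius_series_entire_general p₀ γ Λ r a hrec
end

section
/- For the recurrence a_n = (−p₀(n−3)(n−2)a_{n−2} − γ(n−3)²a_{n−3} + Λa_{n−4}) / (n(n−1)(n−2)(n−3)) for n ≥ 4 (case r = 0, a₀,…,a₃ given), there exist constants C > 0 and N such that |a_n| ≤ C/((n−3)! )^{1/2} for all n ≥ N; in particular a_n → 0. -/
/-!
Put `bₙ = |aₙ| √((n-3)!)` and `K = |p₀| + |γ| + |Λ|`. The denominator of the recurrence is at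
least `n⁴/16`, the numerator has coefficients at most `K n²`, and passing from `bₙ₋ⱼ` to the weight
`√((n-3)!)` costs at most `n^{j/2}`; the worst lag `j = 3` gives
`bₙ ≤ 16 K n^{-1/2} · max (bₙ₋₂, bₙ₋₃, bₙ₋₄)`. Once `√n ≥ 16 K`, `bₙ` never exceeds the largest of
its lagged values, so it stays bounded.
-/

open Filter Topology Nat

theorem Nat.factorial_le_factorial_sub_mul_pow {n k : ℕ} (h : k ≤ n) : n ! ≤ (n - k)! * n ^ k := by
  rw [← factorial_mul_descFactorial h]
  exact Nat.mul_le_mul_left _ (descFactorial_le_pow n k)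

theorem Real.sqrt_factorial_le_mul_pow {m j : ℕ} {s : ℝ} (hj : j ≤ m) (hs : 0 ≤ s)
    (hm : (m : ℝ) ≤ s ^ 2) : √(m ! : ℝ) ≤ √((m - j)! : ℝ) * s ^ j := by
  rw [← Real.sqrt_sq (pow_nonneg hs j), ← Real.sqrt_mul (by positivity)]
  refine Real.sqrt_le_sqrt ?_
  calc (m ! : ℝ) ≤ (m - j)! * (m : ℝ) ^ j := by
        exact_mod_cast factorial_le_factorial_sub_mul_pow hj
    _ ≤ (m - j)! * (s ^ j) ^ 2 := by
      rw [← pow_mul, mul_comm j, pow_mul]; gcongr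

theorem tendsto_div_sqrt_factorial_sub (C : ℝ) (k : ℕ) :
    Tendsto (fun n : ℕ => C / √((n - k)! : ℝ)) atTop (𝓝 0) :=
  tendsto_const_nhds.div_atTop <| Real.tendsto_sqrt_atTop.comp <|
    tendsto_natCast_atTop_atTop.comp <| factorial_tendsto_atTop.comp <| tendsto_sub_atTop_nat k

theorem pow_four_div_le_mul_sub {x : ℝ} (hx : 6 ≤ x) :
    x ^ 4 / 16 ≤ x * (x - 1) * (x - 2) * (x - 3) :=
  calc x ^ 4 / 16 = (x / 2) * (x / 2) * (x / 2) * (x / 2) := by ring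
    _ ≤ x * (x - 1) * (x - 2) * (x - 3) := by gcongr <;> bound

theorem exists_pos_bound_of_le_max_lags {b : ℕ → ℝ} {N : ℕ}
    (hstep : ∀ n ≥ N + 4, b n ≤ max (b (n - 2)) (max (b (n - 3)) (b (n - 4)))) :
    ∃ C > 0, ∀ n ≥ N, b n ≤ C := by
  set C := 1 + ∑ m ∈ Finset.range (N + 4), |b m|
  have hbase : ∀ m < N + 4, b m ≤ C := fun m hm =>
    calc b m ≤ |b m| := le_abs_self _
      _ ≤ ∑ m ∈ Finset.range (N + 4), |b m| :=
        Finset.single_le_sum (f := fun m => |b m|) (fun _ _ => abs_nonneg _) (Finset.mem_range.2 hm)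
      _ ≤ C := le_add_of_nonneg_left zero_le_one
  refine ⟨C, by positivity, fun n => ?_⟩
  induction n using Nat.strong_induction_on with
  | _ n ih =>
    intro hn
    rcases lt_or_ge n (N + 4) with h | h
    · exact hbase n h
    · exact (hstep n h).trans <| max_le (ih _ (by omega) (by omega)) <|
        max_le (ih _ (by omega) (by omega)) (ih _ (by omega) (by omega))

theorem abs_recurrence_numerator_le (p₀ γ Λ : ℝ) {x : ℝ} (hx : 3 ≤ x) (u v w : ℝ) :
    |-p₀ * (x - 3) * (x - 2) * u - γ * (x - 3) ^ 2 * v + Λ * w|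
      ≤ x ^ 2 * (|p₀| * |u| + |γ| * |v|) + |Λ| * |w| := by
  have h₁ : (x - 3) * (x - 2) ≤ x ^ 2 := by nlinarith
  have h₂ : (x - 3) ^ 2 ≤ x ^ 2 := by nlinarith
  calc _ ≤ |-p₀ * (x - 3) * (x - 2) * u| + |-(γ * (x - 3) ^ 2 * v)| + |Λ * w| :=
        sub_eq_add_neg _ (γ * (x - 3) ^ 2 * v) ▸ abs_add_three _ _ _
    _ = |p₀| * ((x - 3) * (x - 2)) * |u| + |γ| * (x - 3) ^ 2 * |v| + |Λ| * |w| := by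
        simp only [abs_neg, abs_mul, abs_pow, abs_of_nonneg (by linarith : 0 ≤ x - 3),
          abs_of_nonneg (by linarith : 0 ≤ x - 2)]
        ring
    _ ≤ |p₀| * x ^ 2 * |u| + |γ| * x ^ 2 * |v| + |Λ| * |w| := by gcongr
    _ = _ := by ring

noncomputable def scaledCoeff (a : ℕ → ℝ) (n : ℕ) : ℝ := |a n| * √((n - 3)! : ℝ)

theorem scaledCoeff_nonneg (a : ℕ → ℝ) (n : ℕ) : 0 ≤ scaledCoeff a n := by
  unfold scaledCoeff; positivity

theorem abs_mul_sqrt_factorial_le_scaledCoeff_mul {a : ℕ → ℝ} {n j : ℕ} (hj : j + 3 ≤ n) :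
    |a (n - j)| * √((n - 3)! : ℝ) ≤ scaledCoeff a (n - j) * √n ^ j := by
  have h := Real.sqrt_factorial_le_mul_pow (m := n - 3) (j := j) (by omega) (Real.sqrt_nonneg n)
    (by rw [Real.sq_sqrt n.cast_nonneg]; exact_mod_cast n.sub_le 3)
  rw [Nat.sub_right_comm] at h
  rw [scaledCoeff, mul_assoc]
  exact mul_le_mul_of_nonneg_left h (abs_nonneg _)

theorem scaledCoeff_le_max_lags {p₀ γ Λ : ℝ} {a : ℕ → ℝ} {n : ℕ}
    (hrec : a n = (-p₀ * ((n : ℝ) - 3) * ((n : ℝ) - 2) * a (n - 2)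
              - γ * ((n : ℝ) - 3) ^ 2 * a (n - 3) + Λ * a (n - 4))
            / ((n : ℝ) * ((n : ℝ) - 1) * ((n : ℝ) - 2) * ((n : ℝ) - 3)))
    (hn : 7 ≤ n) (hK : 16 * (|p₀| + |γ| + |Λ|) ≤ √n) :
    scaledCoeff a n ≤
      max (scaledCoeff a (n - 2)) (max (scaledCoeff a (n - 3)) (scaledCoeff a (n - 4))) := by
  set M := max (scaledCoeff a (n - 2)) (max (scaledCoeff a (n - 3)) (scaledCoeff a (n - 4)))
  set s := √(n : ℝ)
  have hn' : (7 : ℝ) ≤ n := by exact_mod_cast hn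
  have hs : s ^ 2 = n := Real.sq_sqrt n.cast_nonneg
  have hs1 : 1 ≤ s := Real.one_le_sqrt.2 (by linarith)
  have hM : 0 ≤ M := (scaledCoeff_nonneg a _).trans (le_max_left _ _)
  have h₂ : |a (n - 2)| * √((n - 3)! : ℝ) ≤ M * s ^ 2 :=
    (abs_mul_sqrt_factorial_le_scaledCoeff_mul (by omega)).trans
      (mul_le_mul_of_nonneg_right (le_max_left _ _) (by positivity))
  have h₃ : |a (n - 3)| * √((n - 3)! : ℝ) ≤ M * s ^ 3 :=
    (abs_mul_sqrt_factorial_le_scaledCoeff_mul (by omega)).trans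
      (mul_le_mul_of_nonneg_right ((le_max_left _ _).trans (le_max_right _ _)) (by positivity))
  have h₄ : |a (n - 4)| * √((n - 3)! : ℝ) ≤ M * s ^ 4 :=
    (abs_mul_sqrt_factorial_le_scaledCoeff_mul (by omega)).trans
      (mul_le_mul_of_nonneg_right ((le_max_right _ _).trans (le_max_right _ _)) (by positivity))
  set D := (n : ℝ) * ((n : ℝ) - 1) * ((n : ℝ) - 2) * ((n : ℝ) - 3)
  have hD : s ^ 8 / 16 ≤ D :=
    calc s ^ 8 / 16 = (n : ℝ) ^ 4 / 16 := by rw [← hs]; ring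
      _ ≤ D := pow_four_div_le_mul_sub (by linarith)
  have hD0 : 0 < D := lt_of_lt_of_le (by positivity) hD
  rw [scaledCoeff, hrec, abs_div, abs_of_pos hD0, div_mul_eq_mul_div, div_le_iff₀ hD0]
  calc _ ≤ ((n : ℝ) ^ 2 * (|p₀| * |a (n - 2)| + |γ| * |a (n - 3)|) + |Λ| * |a (n - 4)|)
          * √((n - 3)! : ℝ) :=
        mul_le_mul_of_nonneg_right (abs_recurrence_numerator_le p₀ γ Λ (by linarith) _ _ _)
          (Real.sqrt_nonneg _)
    _ = s ^ 4 * (|p₀| * (|a (n - 2)| * √((n - 3)! : ℝ)) + |γ| * (|a (n - 3)| * √((n - 3)! : ℝ)))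
          + |Λ| * (|a (n - 4)| * √((n - 3)! : ℝ)) := by rw [← hs]; ring
    _ ≤ s ^ 4 * (|p₀| * (M * s ^ 2) + |γ| * (M * s ^ 3)) + |Λ| * (M * s ^ 4) := by gcongr
    _ = (|p₀| * s ^ 6 + |γ| * s ^ 7 + |Λ| * s ^ 4) * M := by ring
    _ ≤ (|p₀| + |γ| + |Λ|) * s ^ 7 * M := by
        have hs₆ : s ^ 6 ≤ s ^ 7 := pow_le_pow_right₀ hs1 (by norm_num)
        have hs₄ : s ^ 4 ≤ s ^ 7 := pow_le_pow_right₀ hs1 (by norm_num)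
        gcongr
        linear_combination |p₀| * hs₆ + |Λ| * hs₄
    _ ≤ s / 16 * s ^ 7 * M := by gcongr; linarith
    _ = M * (s ^ 8 / 16) := by ring
    _ ≤ M * D := by gcongr

/-- The Frobenius coefficients (case r = 0) decay superpolynomially: |aₙ| ≤ C/√((n−3)!)
eventually, and in particular aₙ → 0. -/
theorem frobenius_coefficients_decay (p₀ γ Λ : ℝ) (a : ℕ → ℝ)
    (hrec : ∀ n : ℕ, 4 ≤ n →
      a n = (-p₀ * ((n : ℝ) - 3) * ((n : ℝ) - 2) * a (n - 2)
              - γ * ((n : ℝ) - 3) ^ 2 * a (n - 3) + Λ * a (n - 4))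
            / ((n : ℝ) * ((n : ℝ) - 1) * ((n : ℝ) - 2) * ((n : ℝ) - 3))) :
    (∃ C > (0 : ℝ), ∃ N : ℕ, ∀ n ≥ N,
        |a n| ≤ C / Real.sqrt ((Nat.factorial (n - 3) : ℝ))) ∧
      Filter.Tendsto a Filter.atTop (nhds 0) := by
  set N := max 7 ⌈(16 * (|p₀| + |γ| + |Λ|)) ^ 2⌉₊
  obtain ⟨C, hC, hbound⟩ : ∃ C > 0, ∀ n ≥ N, scaledCoeff a n ≤ C :=
    exists_pos_bound_of_le_max_lags fun n hn =>
      scaledCoeff_le_max_lags (hrec n (by omega)) (by omega) <|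
        (Real.le_sqrt (by positivity) n.cast_nonneg).2 <| Nat.ceil_le.1 (by omega)
  have hdecay : ∀ n ≥ N, |a n| ≤ C / √((n - 3)! : ℝ) := fun n hn =>
    (le_div_iff₀ (Real.sqrt_pos.2 (by positivity))).2 (hbound n hn)
  exact ⟨⟨C, hC, N, hdecay⟩, squeeze_zero_norm' (eventually_atTop.2 ⟨N, hdecay⟩)
    (tendsto_div_sqrt_factorial_sub C 3)⟩
end
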